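/- arXiv:2408.10061 — 2 statements merged into one kernel-verified Lean document; each statement's English description precedes it below -/
import Mathlib

section
/- Let X ∈ Ω, δ = dist(·,∂Ω), and let φ be a Lipschitz function supported in 8B_X = B(X, 4δ(X)) with |∇φ(Z)| ≤ C₁/δ(X) + C₁ 2^i · 1_{2^{−i−1} ≤ δ(Z) ≤ 2^{−i}}(Z) for a.e. Z. Then for every y ∈ ∂Ω, ∫_{{Z : |Z−y| ≤ 8δ(Z)}} δ(Z)^{2−n} |∇φ(Z)|² dZ ≤ C, where C depends only on n and C₁ (not on X, i, or y). -/
/-!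
Write `δ = infDist · F` and `d = dim E ≥ 2`. The part `{Z ∈ Γ_y : s ≤ δ(Z) ≤ 2s}` of the cone
`Γ_y = {Z : |Z - y| ≤ a δ(Z)}` lies in a ball of radius `2as` about `y`, so it has measure
`≲ sᵈ`, while `δ^{2-d} ≤ s^{2-d}` there; its contribution to `∫ δ^{2-d}` is therefore `≲ s²`.
Summing over the dyadic layers `s = R 2^{-k-1}` gives `∫_{Γ_y ∩ {δ ≤ R}} δ^{2-d} ≲ R²`.
The gradient bound splits `|∇φ|²` into `2(C₁/δ(X))²` on `B(X, 4δ(X)) ⊆ {δ ≤ 5δ(X)}` and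
`2(C₁2^i)²` on a single layer with `s = 2^{-i-1}`, and both products are `≲ C₁²`.
-/

open Metric MeasureTheory Set Module
open scoped ENNReal

def nonTangentialCone {X : Type*} [PseudoMetricSpace X] (F : Set X) (a : ℝ) (y : X) : Set X :=
  {Z | dist Z y ≤ a * infDist Z F}

def dyadicLayer {X : Type*} [PseudoMetricSpace X] (F : Set X) (s : ℝ) : Set X :=
  {Z | s ≤ infDist Z F ∧ infDist Z F ≤ 2 * s}

lemma nonTangentialCone_inter_subset_closedBall {X : Type*} [PseudoMetricSpace X] {F : Set X}
    {a : ℝ} (ha : 0 ≤ a) (y : X) (t : ℝ) :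
    nonTangentialCone F a y ∩ {Z | infDist Z F ≤ t} ⊆ closedBall y (a * t) :=
  fun _ ⟨hZ, ht⟩ => hZ.trans (mul_le_mul_of_nonneg_left ht ha)

lemma rpow_two_sub_mul_pow {s : ℝ} (hs : 0 < s) (c : ℝ) (d : ℕ) :
    s ^ ((2 : ℝ) - d) * (c * s) ^ d = s ^ 2 * c ^ d := by
  rw [Real.rpow_sub hs, Real.rpow_two, Real.rpow_natCast, mul_pow]
  field_simp

lemma hasSum_sq_div_two_pow_succ (R : ℝ) :
    HasSum (fun k : ℕ => (R / 2 ^ (k + 1)) ^ 2) (R ^ 2 / 3) := by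
  have hterm : (fun k : ℕ => (R / 2 ^ (k + 1)) ^ 2) = fun k => R ^ 2 / 4 * (1 / 4 : ℝ) ^ k := by
    ext k
    rw [div_pow, ← pow_mul, show (1 / 4 : ℝ) = 1 / 2 ^ 2 by norm_num, one_div_pow, ← pow_mul]
    field_simp; ring
  rw [hterm, show R ^ 2 / 3 = R ^ 2 / 4 * (1 - 1 / 4 : ℝ)⁻¹ by norm_num; ring]
  exact (hasSum_geometric_of_lt_one (by norm_num) (by norm_num)).mul_left _

lemma exists_mem_dyadicLayer {X : Type*} [PseudoMetricSpace X] {F : Set X} {R : ℝ} {Z : X}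
    (hpos : 0 < infDist Z F) (hR : infDist Z F ≤ R) :
    ∃ k : ℕ, Z ∈ dyadicLayer F (R / 2 ^ (k + 1)) := by
  obtain ⟨k, hk, hk'⟩ := exists_nat_pow_near ((one_le_div hpos).2 hR) one_lt_two
  rw [div_lt_iff₀ hpos] at hk'
  rw [le_div_iff₀ hpos] at hk
  refine ⟨k, ?_, ?_⟩
  · rw [div_le_iff₀ (by positivity)]; linarith
  · rw [pow_succ]; field_simp; linarith

variable {E : Type*} [NormedAddCommGroup E] [NormedSpace ℝ E]

lemma fderiv_eq_zero_of_support_subset_ball {G : Type*} [NormedAddCommGroup G]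
    [NormedSpace ℝ G] {φ : E → G} {X Z : E} {r : ℝ} (hφ : Function.support φ ⊆ ball X r)
    (hZ : Z ∉ closedBall X r) : fderiv ℝ φ Z = 0 :=
  Function.notMem_support.1 fun hZ' =>
    hZ (closure_ball_subset_closedBall (closure_mono hφ (support_fderiv_subset ℝ hZ')))

lemma ofReal_rpow_mul_sq_fderiv_le {F : Set E} {r s A M d : ℝ} {X Z : E} {φ : E → ℝ}
    (hsupp : Function.support φ ⊆ ball X r)
    (hZ : ‖fderiv ℝ φ Z‖ ≤ A + M * (dyadicLayer F s).indicator (fun _ => (1 : ℝ)) Z) :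
    ENNReal.ofReal (infDist Z F ^ d * ‖fderiv ℝ φ Z‖ ^ 2) ≤
      ENNReal.ofReal (2 * A ^ 2) *
          (closedBall X r).indicator (fun W => ENNReal.ofReal (infDist W F ^ d)) Z +
        ENNReal.ofReal (2 * M ^ 2) *
          (dyadicLayer F s).indicator (fun W => ENNReal.ofReal (infDist W F ^ d)) Z := by
  by_cases hZB : Z ∉ closedBall X r
  · simp [fderiv_eq_zero_of_support_subset_ball hsupp hZB]
  have hδ : 0 ≤ infDist Z F ^ d := Real.rpow_nonneg infDist_nonneg _
  have hD := norm_nonneg (fderiv ℝ φ Z)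
  rw [indicator_of_mem (not_not.1 hZB), ← ENNReal.ofReal_mul (by positivity)]
  by_cases hZL : Z ∈ dyadicLayer F s
  · rw [indicator_of_mem hZL] at hZ ⊢
    rw [← ENNReal.ofReal_mul (by positivity)]
    refine (ENNReal.ofReal_le_ofReal ?_).trans ENNReal.ofReal_add_le
    have : ‖fderiv ℝ φ Z‖ ^ 2 ≤ 2 * A ^ 2 + 2 * M ^ 2 := by nlinarith [sq_nonneg (A - M)]
    nlinarith
  · rw [indicator_of_notMem hZL] at hZ ⊢
    rw [mul_zero, add_zero]
    apply ENNReal.ofReal_le_ofReal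
    have : ‖fderiv ℝ φ Z‖ ^ 2 ≤ 2 * A ^ 2 := by nlinarith
    nlinarith

variable [MeasurableSpace E] [BorelSpace E] [FiniteDimensional ℝ E] {μ : Measure E}
  [μ.IsAddHaarMeasure]

lemma setLIntegral_infDist_rpow_le_of_subset_dyadicLayer {F : Set E} {a s : ℝ} {y : E}
    (ha : 0 ≤ a) (hs : 0 < s) (hd : 2 ≤ finrank ℝ E) {S : Set E}
    (hS : S ⊆ nonTangentialCone F a y ∩ dyadicLayer F s) :
    ∫⁻ Z in S, ENNReal.ofReal (infDist Z F ^ ((2 : ℝ) - finrank ℝ E)) ∂μ ≤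
      ENNReal.ofReal (s ^ 2 * (2 * a) ^ finrank ℝ E) * μ (ball 0 1) := by
  have hexp : (2 : ℝ) - finrank ℝ E ≤ 0 := by
    have : (2 : ℝ) ≤ finrank ℝ E := by exact_mod_cast hd
    linarith
  have hball : S ⊆ closedBall y (2 * a * s) := fun Z hZ => by
    have := nonTangentialCone_inter_subset_closedBall ha y (2 * s) ⟨(hS hZ).1, (hS hZ).2.2⟩
    rwa [← mul_assoc, mul_comm a] at this
  calc ∫⁻ Z in S, ENNReal.ofReal (infDist Z F ^ ((2 : ℝ) - finrank ℝ E)) ∂μ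
      ≤ ∫⁻ _ in S, ENNReal.ofReal (s ^ ((2 : ℝ) - finrank ℝ E)) ∂μ :=
        setLIntegral_mono measurable_const fun Z hZ => ENNReal.ofReal_le_ofReal <|
          Real.rpow_le_rpow_of_nonpos hs (hS hZ).2.1 hexp
    _ = ENNReal.ofReal (s ^ ((2 : ℝ) - finrank ℝ E)) * μ S := setLIntegral_const _ _
    _ ≤ ENNReal.ofReal (s ^ ((2 : ℝ) - finrank ℝ E)) * μ (closedBall y (2 * a * s)) := by
        gcongr
    _ = ENNReal.ofReal (s ^ 2 * (2 * a) ^ finrank ℝ E) * μ (ball 0 1) := by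
        rw [Measure.addHaar_closedBall μ y (by positivity), ← mul_assoc,
          ← ENNReal.ofReal_mul (by positivity), rpow_two_sub_mul_pow hs]

lemma setLIntegral_infDist_rpow_le_of_subset_nonTangentialCone {F : Set E} {a R : ℝ} {y : E}
    (ha : 0 ≤ a) (hR : 0 < R) (hd : 2 ≤ finrank ℝ E) {S : Set E}
    (hS : S ⊆ nonTangentialCone F a y ∩ {Z | infDist Z F ≤ R}) :
    ∫⁻ Z in S, ENNReal.ofReal (infDist Z F ^ ((2 : ℝ) - finrank ℝ E)) ∂μ ≤
      ENNReal.ofReal (R ^ 2 / 3 * (2 * a) ^ finrank ℝ E) * μ (ball 0 1) := by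
  set f := fun Z => ENNReal.ofReal (infDist Z F ^ ((2 : ℝ) - finrank ℝ E))
  set layer := fun k : ℕ => S ∩ dyadicLayer F (R / 2 ^ (k + 1))
  have hcover : S ⊆ closedBall y 0 ∪ ⋃ k, layer k := by
    intro Z hZ
    rcases (infDist_nonneg (x := Z) (s := F)).eq_or_lt with h0 | hpos
    · left
      simpa using nonTangentialCone_inter_subset_closedBall ha y 0 ⟨(hS hZ).1, h0.symm.le⟩
    · obtain ⟨k, hk⟩ := exists_mem_dyadicLayer hpos (hS hZ).2
      exact Or.inr (mem_iUnion.2 ⟨k, hZ, hk⟩)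
  have hnull : μ (closedBall y 0) = 0 := by
    rw [Measure.addHaar_closedBall μ y le_rfl, zero_pow (by omega)]; simp
  have hsum := (hasSum_sq_div_two_pow_succ R).mul_right ((2 * a) ^ finrank ℝ E)
  calc ∫⁻ Z in S, f Z ∂μ ≤ ∫⁻ Z in closedBall y 0 ∪ ⋃ k, layer k, f Z ∂μ :=
        lintegral_mono_set hcover
    _ ≤ ∫⁻ Z in closedBall y 0, f Z ∂μ + ∫⁻ Z in ⋃ k, layer k, f Z ∂μ :=
        lintegral_union_le _ _ _
    _ ≤ ∑' k, ∫⁻ Z in layer k, f Z ∂μ := by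
        rw [setLIntegral_measure_zero _ _ hnull, zero_add]; exact lintegral_iUnion_le _ _
    _ ≤ ∑' k : ℕ, ENNReal.ofReal ((R / 2 ^ (k + 1)) ^ 2 * (2 * a) ^ finrank ℝ E) *
          μ (ball 0 1) :=
        ENNReal.tsum_le_tsum fun k => setLIntegral_infDist_rpow_le_of_subset_dyadicLayer ha
          (by positivity) hd fun Z hZ => ⟨(hS hZ.1).1, hZ.2⟩
    _ = ENNReal.ofReal (R ^ 2 / 3 * (2 * a) ^ finrank ℝ E) * μ (ball 0 1) := by
        rw [ENNReal.tsum_mul_right,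
          ← ENNReal.ofReal_tsum_of_nonneg (fun _ => by positivity) hsum.summable, hsum.tsum_eq]

lemma setLIntegral_nonTangentialCone_rpow_mul_sq_fderiv_le {F : Set E} {a r s A M : ℝ}
    {X y : E} (ha : 0 ≤ a) (hr : 0 < r) (hs : 0 < s) (hd : 2 ≤ finrank ℝ E) {φ : E → ℝ}
    (hsupp : Function.support φ ⊆ ball X r)
    (hgrad : ∀ᵐ Z ∂μ,
      ‖fderiv ℝ φ Z‖ ≤ A + M * (dyadicLayer F s).indicator (fun _ => (1 : ℝ)) Z) :
    ∫⁻ Z in nonTangentialCone F a y,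
        ENNReal.ofReal (infDist Z F ^ ((2 : ℝ) - finrank ℝ E) * ‖fderiv ℝ φ Z‖ ^ 2) ∂μ ≤
      ENNReal.ofReal ((2 * (A * (r + infDist X F)) ^ 2 / 3 + 2 * (M * s) ^ 2) *
        (2 * a) ^ finrank ℝ E) * μ (ball 0 1) := by
  set Γ := nonTangentialCone F a y
  set B := closedBall X r
  set L := dyadicLayer F s
  set g := fun Z => ENNReal.ofReal (infDist Z F ^ ((2 : ℝ) - finrank ℝ E))
  set c := (2 * a) ^ finrank ℝ E
  have hg : Measurable g := ((continuous_infDist_pt F).measurable.pow_const _).ennreal_ofReal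
  have hL : MeasurableSet L := (continuous_infDist_pt F).measurable measurableSet_Icc
  have hΓ : MeasurableSet Γ :=
    (isClosed_le (continuous_id.dist continuous_const)
      (continuous_const.mul (continuous_infDist_pt F))).measurableSet
  have hBΓ : ∫⁻ Z in Γ, B.indicator g Z ∂μ ≤
      ENNReal.ofReal ((r + infDist X F) ^ 2 / 3 * c) * μ (ball 0 1) := by
    refine (lintegral_indicator_le _ _).trans ?_
    rw [Measure.restrict_restrict' hΓ]
    refine setLIntegral_infDist_rpow_le_of_subset_nonTangentialCone ha
      (add_pos_of_pos_of_nonneg hr infDist_nonneg) hd fun Z ⟨hZB, hZΓ⟩ => ⟨hZΓ, ?_⟩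
    show infDist Z F ≤ r + infDist X F
    linarith [infDist_le_infDist_add_dist (x := Z) (y := X) (s := F), mem_closedBall.1 hZB]
  have hLΓ : ∫⁻ Z in Γ, L.indicator g Z ∂μ ≤ ENNReal.ofReal (s ^ 2 * c) * μ (ball 0 1) := by
    refine (lintegral_indicator_le _ _).trans ?_
    rw [Measure.restrict_restrict' hΓ]
    exact setLIntegral_infDist_rpow_le_of_subset_dyadicLayer ha hs hd
      fun Z ⟨hZL, hZΓ⟩ => ⟨hZΓ, hZL⟩
  calc _ ≤ ∫⁻ Z in Γ, (ENNReal.ofReal (2 * A ^ 2) * B.indicator g Z +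
          ENNReal.ofReal (2 * M ^ 2) * L.indicator g Z) ∂μ :=
        lintegral_mono_ae <| ae_restrict_of_ae <|
          hgrad.mono fun Z hZ => ofReal_rpow_mul_sq_fderiv_le hsupp hZ
    _ = ENNReal.ofReal (2 * A ^ 2) * ∫⁻ Z in Γ, B.indicator g Z ∂μ +
          ENNReal.ofReal (2 * M ^ 2) * ∫⁻ Z in Γ, L.indicator g Z ∂μ := by
        rw [lintegral_add_left ((hg.indicator measurableSet_closedBall).const_mul _),
          lintegral_const_mul _ (hg.indicator measurableSet_closedBall),
          lintegral_const_mul _ (hg.indicator hL)]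
    _ ≤ ENNReal.ofReal (2 * A ^ 2) *
            (ENNReal.ofReal ((r + infDist X F) ^ 2 / 3 * c) * μ (ball 0 1)) +
          ENNReal.ofReal (2 * M ^ 2) * (ENNReal.ofReal (s ^ 2 * c) * μ (ball 0 1)) := by
        gcongr
    _ = _ := by
        rw [← mul_assoc, ← mul_assoc, ← ENNReal.ofReal_mul (by positivity),
          ← ENNReal.ofReal_mul (by positivity), ← add_mul,
          ← ENNReal.ofReal_add (by positivity) (by positivity)]
        congr 2; ring

theorem cone_integral_cutoff_bound_general (n : ℕ) (hn : 2 ≤ n) (C₁ : ℝ) :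
    ∃ C : ℝ, 0 < C ∧
      ∀ (Ω : Set (EuclideanSpace ℝ (Fin n))), IsOpen Ω → (frontier Ω).Nonempty →
      ∀ X ∈ Ω, ∀ i : ℕ, ∀ (φ : EuclideanSpace ℝ (Fin n) → ℝ) (K : NNReal),
        LipschitzWith K φ →
        Function.support φ ⊆ ball X (4 * infDist X (frontier Ω)) →
        (∀ᵐ Z, ‖fderiv ℝ φ Z‖ ≤ C₁ / infDist X (frontier Ω) +
          C₁ * 2 ^ i *
            Set.indicator {W | (2 : ℝ) ^ (-(i : ℤ) - 1) ≤ infDist W (frontier Ω) ∧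
              infDist W (frontier Ω) ≤ (2 : ℝ) ^ (-(i : ℤ))} (fun _ => (1 : ℝ)) Z) →
        ∀ y ∈ frontier Ω,
          ∫⁻ Z in {Z | dist Z y ≤ 8 * infDist Z (frontier Ω)},
            ENNReal.ofReal (infDist Z (frontier Ω) ^ ((2 : ℝ) - n) * ‖fderiv ℝ φ Z‖ ^ 2) ≤
            ENNReal.ofReal C := by
  set V := volume (ball (0 : EuclideanSpace ℝ (Fin n)) 1)
  -- `18 ≥ 2 · 5² / 3 + 2 · (1 / 2)²`, the two terms coming from the ball and from the layer
  refine ⟨18 * C₁ ^ 2 * 16 ^ n * V.toReal + 1, by positivity, ?_⟩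
  intro Ω hΩ hfr X hX i φ K _ hsupp hgrad y _
  have hδX : 0 < infDist X (frontier Ω) :=
    (isClosed_frontier.notMem_iff_infDist_pos hfr).1 fun h => h.2 (by rwa [hΩ.interior_eq])
  have hlayer : (2 : ℝ) ^ (-(i : ℤ)) = 2 * 2 ^ (-(i : ℤ) - 1) := by
    rw [zpow_sub₀ two_ne_zero, zpow_one]; field_simp
  rw [hlayer] at hgrad
  have key := setLIntegral_nonTangentialCone_rpow_mul_sq_fderiv_le (a := 8) (y := y)
    (by norm_num) (by positivity) (by positivity) (by simpa using hn) hsupp hgrad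
  rw [finrank_euclideanSpace_fin] at key
  refine key.trans ?_
  have hA : C₁ / infDist X (frontier Ω) * (4 * infDist X (frontier Ω) + infDist X (frontier Ω))
      = 5 * C₁ := by field_simp; ring
  have hM : C₁ * 2 ^ i * (2 : ℝ) ^ (-(i : ℤ) - 1) = C₁ / 2 := by
    rw [zpow_sub₀ two_ne_zero, zpow_neg, zpow_natCast]; field_simp
  rw [hA, hM, ← ENNReal.ofReal_toReal measure_ball_lt_top.ne,
    ← ENNReal.ofReal_mul (by positivity)]
  apply ENNReal.ofReal_le_ofReal
  have hpos : 0 ≤ C₁ ^ 2 * 16 ^ n * V.toReal := by positivity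
  norm_num
  nlinarith

/-- Uniform bound on the non-tangential cone integral of `δ^{2−n} |∇φ|²` for a
Lipschitz cutoff `φ` supported in `8B_X = B(X, 4δ(X))` whose gradient satisfies
`|∇φ(Z)| ≤ C₁/δ(X) + C₁ 2^i 1_{2^{−i−1} ≤ δ(Z) ≤ 2^{−i}}(Z)` a.e.; the bound `C`
depends only on `n` and `C₁`. -/
theorem cone_integral_cutoff_bound (n : ℕ) (hn : 2 ≤ n) (C₁ : ℝ) (hC₁ : 0 < C₁) :
    ∃ C : ℝ, 0 < C ∧
      ∀ (Ω : Set (EuclideanSpace ℝ (Fin n))), IsOpen Ω → (frontier Ω).Nonempty →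
      ∀ X ∈ Ω, ∀ i : ℕ, ∀ (φ : EuclideanSpace ℝ (Fin n) → ℝ) (K : NNReal),
        LipschitzWith K φ →
        Function.support φ ⊆ ball X (4 * infDist X (frontier Ω)) →
        (∀ᵐ Z, ‖fderiv ℝ φ Z‖ ≤ C₁ / infDist X (frontier Ω) +
          C₁ * 2 ^ i *
            Set.indicator {W | (2 : ℝ) ^ (-(i : ℤ) - 1) ≤ infDist W (frontier Ω) ∧
              infDist W (frontier Ω) ≤ (2 : ℝ) ^ (-(i : ℤ))} (fun _ => (1 : ℝ)) Z) →
        ∀ y ∈ frontier Ω,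
          ∫⁻ Z in {Z | dist Z y ≤ 8 * infDist Z (frontier Ω)},
            ENNReal.ofReal (infDist Z (frontier Ω) ^ ((2 : ℝ) - n) * ‖fderiv ℝ φ Z‖ ^ 2) ≤
            ENNReal.ofReal C :=
  cone_integral_cutoff_bound_general n hn C₁
end

section
/- Let A : Ω → ℝ^{n×n} be bounded measurable, θ ∈ C_c^∞(B(0,1/8)) with ∫θ = 1, and B(Y) := ∬ A(Z) δ(Y)^{−n} θ((Z−Y)/δ(Y)) dZ. Assume |∇δ| ≤ 1 a.e. Then B is locally Lipschitz in Ω and there is C = C(n, θ, ‖A‖_∞) such that δ(Y)|∇B(Y)| ≤ C · ( ⨍_{B(Y, δ(Y)/2)} |A(Z) − B(Y)|² dZ )^{1/2} + C·O, in particular δ|∇B| ∈ L^∞(Ω) with bound depending only on n, θ, and ‖A‖_{L^∞}. -/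
open Metric MeasureTheory

namespace MollAux

variable {n : ℕ}

lemma inv_pow_sub_inv_pow_le {τ : ℝ} (hτ : 0 < τ) :
    ∀ (m : ℕ) (a b : ℝ), τ ≤ a → τ ≤ b →
      |(a ^ m)⁻¹ - (b ^ m)⁻¹| ≤ m / τ ^ (m + 1) * |a - b| := by
  intro m
  induction m with
  | zero => intro a b _ _; simp
  | succ m ih =>
    intro a b ha hb
    have ha0 : 0 < a := lt_of_lt_of_le hτ ha
    have hb0 : 0 < b := lt_of_lt_of_le hτ hb
    have key : (a ^ (m + 1))⁻¹ - (b ^ (m + 1))⁻¹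
        = a⁻¹ * ((a ^ m)⁻¹ - (b ^ m)⁻¹) + (a⁻¹ - b⁻¹) * (b ^ m)⁻¹ := by
      field_simp
      ring
    rw [key]
    have h1 : |a⁻¹ * ((a ^ m)⁻¹ - (b ^ m)⁻¹)| ≤ τ⁻¹ * (m / τ ^ (m + 1) * |a - b|) := by
      rw [abs_mul]
      have e1 : |a⁻¹| ≤ τ⁻¹ := by
        rw [abs_of_pos (inv_pos.2 ha0)]
        exact inv_anti₀ hτ ha
      exact mul_le_mul e1 (ih a b ha hb) (abs_nonneg _) (inv_pos.2 hτ).le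
    have h2 : |(a⁻¹ - b⁻¹) * (b ^ m)⁻¹| ≤ |a - b| / τ ^ 2 * (τ ^ m)⁻¹ := by
      rw [abs_mul]
      have e1 : |a⁻¹ - b⁻¹| ≤ |a - b| / τ ^ 2 := by
        rw [inv_sub_inv ha0.ne' hb0.ne', abs_div, abs_mul]
        rw [abs_of_pos ha0, abs_of_pos hb0]
        have hab : τ ^ 2 ≤ a * b := by nlinarith
        calc |b - a| / (a * b) ≤ |b - a| / τ ^ 2 := by
              apply div_le_div_of_nonneg_left (abs_nonneg _) (by positivity) hab
          _ = |a - b| / τ ^ 2 := by rw [abs_sub_comm]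
      have e2 : |(b ^ m)⁻¹| ≤ (τ ^ m)⁻¹ := by
        rw [abs_of_pos (by positivity)]
        exact inv_anti₀ (by positivity) (pow_le_pow_left₀ hτ.le hb m)
      exact mul_le_mul e1 e2 (abs_nonneg _) (by positivity)
    calc |a⁻¹ * ((a ^ m)⁻¹ - (b ^ m)⁻¹) + (a⁻¹ - b⁻¹) * (b ^ m)⁻¹|
        ≤ |a⁻¹ * ((a ^ m)⁻¹ - (b ^ m)⁻¹)| + |(a⁻¹ - b⁻¹) * (b ^ m)⁻¹| := abs_add_le _ _
      _ ≤ τ⁻¹ * (m / τ ^ (m + 1) * |a - b|) + |a - b| / τ ^ 2 * (τ ^ m)⁻¹ :=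
          add_le_add h1 h2
      _ = (m + 1) / τ ^ (m + 1 + 1) * |a - b| := by
          field_simp
          ring
      _ = (↑(m + 1) : ℝ) / τ ^ (m + 1 + 1) * |a - b| := by push_cast; ring

lemma ker_eq_zero {θ : EuclideanSpace ℝ (Fin n) → ℝ}
    (hθsupp : Function.support θ ⊆ ball 0 (1 / 8)) {t : ℝ} (ht : 0 < t)
    {y z : EuclideanSpace ℝ (Fin n)} (hz : t / 8 ≤ ‖z - y‖) :
    θ (t⁻¹ • (z - y)) = 0 := by
  by_contra h
  have h1 := hθsupp (Function.mem_support.2 h)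
  rw [mem_ball_zero_iff, norm_smul, Real.norm_eq_abs, abs_of_pos (inv_pos.2 ht)] at h1
  have h2 : t⁻¹ * (t / 8) ≤ t⁻¹ * ‖z - y‖ := by
    apply mul_le_mul_of_nonneg_left hz (inv_pos.2 ht).le
  have h3 : t⁻¹ * (t / 8) = 1 / 8 := by field_simp
  linarith

lemma integrableOn_of_bdd {V : Type*} [NormedAddCommGroup V]
    {f : EuclideanSpace ℝ (Fin n) → V} {s : Set (EuclideanSpace ℝ (Fin n))}
    (hs : volume s < ⊤) (hf : AEStronglyMeasurable f volume) {c : ℝ}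
    (h : ∀ z, ‖f z‖ ≤ c) :
    IntegrableOn f s := by
  refine Integrable.mono' (g := fun _ => c) (integrableOn_const hs.ne)
    hf.restrict (ae_of_all _ fun z => h z)

lemma integral_kernel (f : EuclideanSpace ℝ (Fin n) → ℝ) {t : ℝ} (ht : 0 < t)
    (y : EuclideanSpace ℝ (Fin n)) :
    ∫ z : EuclideanSpace ℝ (Fin n), (t ^ n)⁻¹ * f (t⁻¹ • (z - y)) = ∫ x, f x := by
  rw [MeasureTheory.integral_const_mul]
  have h1 : ∫ z : EuclideanSpace ℝ (Fin n), f (t⁻¹ • (z - y))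
      = ∫ z : EuclideanSpace ℝ (Fin n), f (t⁻¹ • z) :=
    integral_sub_right_eq_self (fun z => f (t⁻¹ • z)) y
  rw [h1, Measure.integral_comp_inv_smul volume f t, finrank_euclideanSpace_fin,
    abs_of_pos (pow_pos ht n), smul_eq_mul, inv_mul_cancel_left₀ (pow_pos ht n).ne']

lemma integrable_kernel_smul {θ : EuclideanSpace ℝ (Fin n) → ℝ} {Cθ : ℝ}
    (hθm : Continuous θ) (hθsupp : Function.support θ ⊆ ball 0 (1 / 8))
    (hCθ : ∀ x, |θ x| ≤ Cθ)
    {V : Type*} [NormedAddCommGroup V] [NormedSpace ℝ V]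
    {A : EuclideanSpace ℝ (Fin n) → V} (hA : AEStronglyMeasurable A volume)
    {M : ℝ} (hM : ∀ z, ‖A z‖ ≤ M) (hM0 : 0 ≤ M) {t : ℝ} (ht : 0 < t)
    (y : EuclideanSpace ℝ (Fin n)) :
    Integrable (fun z : EuclideanSpace ℝ (Fin n) =>
      ((t ^ n)⁻¹ * θ (t⁻¹ • (z - y))) • A z) := by
  have hCθ0 : 0 ≤ Cθ := le_trans (abs_nonneg _) (hCθ 0)
  refine Integrable.mono'
    (g := (closedBall y (t / 8)).indicator fun _ => (t ^ n)⁻¹ * Cθ * M) ?_ ?_ ?_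
  · exact (integrable_indicator_iff measurableSet_closedBall).2
      (integrableOn_const measure_closedBall_lt_top.ne)
  · exact ((continuous_const.mul
      (hθm.comp ((continuous_id.sub continuous_const).const_smul t⁻¹))).aestronglyMeasurable).smul hA
  · refine ae_of_all _ fun z => ?_
    by_cases hz : z ∈ closedBall y (t / 8)
    · rw [Set.indicator_of_mem hz, norm_smul, Real.norm_eq_abs, abs_mul,
        abs_of_pos (by positivity : (0:ℝ) < (t ^ n)⁻¹)]
      have : (t ^ n)⁻¹ * |θ (t⁻¹ • (z - y))| ≤ (t ^ n)⁻¹ * Cθ :=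
        mul_le_mul_of_nonneg_left (hCθ _) (by positivity)
      exact mul_le_mul this (hM z) (norm_nonneg _) (by positivity)
    · rw [Set.indicator_of_notMem hz]
      have hz' : t / 8 ≤ ‖z - y‖ := by
        rw [mem_closedBall, dist_eq_norm] at hz
        linarith [not_le.1 hz]
      rw [ker_eq_zero hθsupp ht hz']
      simp

lemma norm_B_le {θ : EuclideanSpace ℝ (Fin n) → ℝ} {Cθ : ℝ}
    (hθm : Continuous θ) (hθsupp : Function.support θ ⊆ ball 0 (1 / 8))
    (hCθ : ∀ x, |θ x| ≤ Cθ)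
    {V : Type*} [NormedAddCommGroup V] [NormedSpace ℝ V] [CompleteSpace V]
    {A : EuclideanSpace ℝ (Fin n) → V} (hA : AEStronglyMeasurable A volume)
    {M : ℝ} (hM : ∀ z, ‖A z‖ ≤ M) (hM0 : 0 ≤ M) {t : ℝ} (ht : 0 < t)
    (y : EuclideanSpace ℝ (Fin n)) :
    ‖∫ z : EuclideanSpace ℝ (Fin n), ((t ^ n)⁻¹ * θ (t⁻¹ • (z - y))) • A z‖
      ≤ M * ∫ x, |θ x| := by
  have habs : ∀ x, |(|θ x|)| ≤ Cθ := fun x => by rw [abs_abs]; exact hCθ x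
  have hsupp2 : Function.support (fun x => |θ x|) ⊆ ball 0 (1 / 8) := by
    intro x hx
    exact hθsupp (by simpa [Function.mem_support, abs_ne_zero] using hx)
  have hint : Integrable (fun z : EuclideanSpace ℝ (Fin n) =>
      ((t ^ n)⁻¹ * |θ (t⁻¹ • (z - y))|) • (1 : ℝ)) :=
    integrable_kernel_smul (hθm.abs) hsupp2 habs
      (aestronglyMeasurable_const) (fun _ => by simp) zero_le_one ht y
  have hint' : Integrable (fun z : EuclideanSpace ℝ (Fin n) =>
      M * ((t ^ n)⁻¹ * |θ (t⁻¹ • (z - y))|)) := by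
    have := hint.const_mul M
    simpa [smul_eq_mul, mul_one] using this
  refine le_trans (norm_integral_le_of_norm_le hint' (ae_of_all _ fun z => ?_)) ?_
  · rw [norm_smul, Real.norm_eq_abs, abs_mul, abs_of_pos (by positivity : (0:ℝ) < (t ^ n)⁻¹)]
    rw [mul_comm M]
    exact mul_le_mul_of_nonneg_left (le_trans (hM z)
      (le_refl M)) (by positivity) |>.trans (by
        exact mul_le_mul_of_nonneg_left (le_refl M) (by positivity))
  · rw [MeasureTheory.integral_const_mul]
    have := integral_kernel (n := n) (fun x => |θ x|) ht y
    rw [this]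

lemma kernel_diff_le {θ : EuclideanSpace ℝ (Fin n) → ℝ} {Cθ : ℝ} {Lθ : NNReal}
    (hCθ : ∀ x, |θ x| ≤ Cθ) (hLθ : LipschitzWith Lθ θ)
    {δ t t' : ℝ} {y y' z : EuclideanSpace ℝ (Fin n)} (hδ : 0 < δ)
    (ht1 : δ / 2 ≤ t) (ht1' : δ / 2 ≤ t')
    (hz : ‖z - y‖ ≤ δ) :
    |(t' ^ n)⁻¹ * θ (t'⁻¹ • (z - y')) - (t ^ n)⁻¹ * θ (t⁻¹ • (z - y))|
      ≤ 2 ^ (n + 2) * (n * Cθ + Lθ + 1) / δ ^ (n + 1) * (‖y' - y‖ + |t' - t|) := by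
  have hτ : 0 < δ / 2 := by linarith
  have ht0 : 0 < t := lt_of_lt_of_le hτ ht1
  have ht0' : 0 < t' := lt_of_lt_of_le hτ ht1'
  have hCθ0 : 0 ≤ Cθ := le_trans (abs_nonneg _) (hCθ 0)
  set u : EuclideanSpace ℝ (Fin n) := t⁻¹ • (z - y) with hu
  set u' : EuclideanSpace ℝ (Fin n) := t'⁻¹ • (z - y') with hu'
  set d1 := ‖y' - y‖ with hd1
  set d2 := |t' - t| with hd2
  have hd10 : 0 ≤ d1 := norm_nonneg _
  have hd20 : 0 ≤ d2 := abs_nonneg _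
  -- split
  have hsplit : |(t' ^ n)⁻¹ * θ u' - (t ^ n)⁻¹ * θ u|
      ≤ |(t' ^ n)⁻¹ - (t ^ n)⁻¹| * |θ u'| + (t ^ n)⁻¹ * |θ u' - θ u| := by
    have e : (t' ^ n)⁻¹ * θ u' - (t ^ n)⁻¹ * θ u
        = ((t' ^ n)⁻¹ - (t ^ n)⁻¹) * θ u' + (t ^ n)⁻¹ * (θ u' - θ u) := by ring
    rw [e]
    refine (abs_add_le _ _).trans ?_
    rw [abs_mul, abs_mul, abs_of_pos (by positivity : (0:ℝ) < (t ^ n)⁻¹)]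
  -- term 1
  have hT1 : |(t' ^ n)⁻¹ - (t ^ n)⁻¹| ≤ n / (δ / 2) ^ (n + 1) * d2 :=
    inv_pow_sub_inv_pow_le hτ n t' t ht1' ht1
  -- lipschitz term
  have hudiff : u' - u = t'⁻¹ • (y - y') + (t'⁻¹ - t⁻¹) • (z - y) := by
    rw [hu, hu']
    module
  have hinv : |t'⁻¹ - t⁻¹| ≤ 1 / (δ / 2) ^ 2 * d2 := by
    have := inv_pow_sub_inv_pow_le hτ 1 t' t ht1' ht1
    simpa using this
  have hnu : ‖u' - u‖ ≤ (δ / 2)⁻¹ * d1 + (1 / (δ / 2) ^ 2 * d2) * δ := by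
    rw [hudiff]
    refine (norm_add_le _ _).trans ?_
    rw [norm_smul, norm_smul, Real.norm_eq_abs, Real.norm_eq_abs,
      abs_of_pos (inv_pos.2 ht0')]
    have e1 : t'⁻¹ * ‖y - y'‖ ≤ (δ / 2)⁻¹ * d1 := by
      rw [hd1, norm_sub_rev (y : EuclideanSpace ℝ (Fin n)) y']
      exact mul_le_mul_of_nonneg_right (inv_anti₀ hτ ht1') (norm_nonneg _)
    have e2 : |t'⁻¹ - t⁻¹| * ‖z - y‖ ≤ (1 / (δ / 2) ^ 2 * d2) * δ :=
      mul_le_mul hinv hz (norm_nonneg _) (by positivity)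
    exact add_le_add e1 e2
  have hT2 : |θ u' - θ u| ≤ Lθ * ((δ / 2)⁻¹ * d1 + (1 / (δ / 2) ^ 2 * d2) * δ) := by
    have := hLθ.dist_le_mul u' u
    rw [Real.dist_eq, dist_eq_norm] at this
    exact this.trans (mul_le_mul_of_nonneg_left hnu Lθ.coe_nonneg)
  have hTn : ((t : ℝ) ^ n)⁻¹ ≤ ((δ / 2) ^ n)⁻¹ :=
    inv_anti₀ (by positivity) (pow_le_pow_left₀ hτ.le ht1 n)
  calc |(t' ^ n)⁻¹ * θ u' - (t ^ n)⁻¹ * θ u|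
      ≤ |(t' ^ n)⁻¹ - (t ^ n)⁻¹| * |θ u'| + (t ^ n)⁻¹ * |θ u' - θ u| := hsplit
    _ ≤ (n / (δ / 2) ^ (n + 1) * d2) * Cθ
        + ((δ / 2) ^ n)⁻¹ * (Lθ * ((δ / 2)⁻¹ * d1 + (1 / (δ / 2) ^ 2 * d2) * δ)) := by
        refine add_le_add (mul_le_mul hT1 (hCθ _) (abs_nonneg _) (by positivity)) ?_
        exact mul_le_mul hTn hT2 (abs_nonneg _) (by positivity)
    _ = (n * Cθ * 2 ^ (n + 1) * d2 + 2 ^ (n + 1) * Lθ * (d1 + 2 * d2)) / δ ^ (n + 1) := by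
        rw [div_pow, div_pow]
        field_simp
        ring
    _ ≤ (2 ^ (n + 2) * (n * Cθ + Lθ + 1) * (d1 + d2)) / δ ^ (n + 1) := by
        have hL0 : (0:ℝ) ≤ Lθ := Lθ.coe_nonneg
        have hn0 : (0:ℝ) ≤ n := Nat.cast_nonneg n
        have hbr : n * Cθ * d2 + Lθ * (d1 + 2 * d2) ≤ 2 * ((n * Cθ + Lθ + 1) * (d1 + d2)) := by
          nlinarith [mul_nonneg (mul_nonneg hn0 hCθ0) hd10, mul_nonneg hL0 hd10,
            mul_nonneg (mul_nonneg hn0 hCθ0) hd20, mul_nonneg hL0 hd20]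
        have hP : (0:ℝ) < 2 ^ (n + 1) := by positivity
        have h2 := mul_le_mul_of_nonneg_left hbr hP.le
        gcongr
        calc (n : ℝ) * Cθ * 2 ^ (n + 1) * d2 + 2 ^ (n + 1) * Lθ * (d1 + 2 * d2)
            = 2 ^ (n + 1) * (n * Cθ * d2 + Lθ * (d1 + 2 * d2)) := by ring
          _ ≤ 2 ^ (n + 1) * (2 * ((n * Cθ + Lθ + 1) * (d1 + d2))) := h2
          _ = 2 ^ (n + 2) * (n * Cθ + Lθ + 1) * (d1 + d2) := by ring
    _ = 2 ^ (n + 2) * (n * Cθ + Lθ + 1) / δ ^ (n + 1) * (d1 + d2) := by ring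

set_option maxHeartbeats 1000000 in
lemma diff_bound {θ : EuclideanSpace ℝ (Fin n) → ℝ} {Cθ : ℝ} {Lθ : NNReal}
    (hθm : Continuous θ) (hθsupp : Function.support θ ⊆ ball 0 (1 / 8))
    (hCθ : ∀ x, |θ x| ≤ Cθ) (hLθ : LipschitzWith Lθ θ)
    {Ω : Set (EuclideanSpace ℝ (Fin n))}
    {A : EuclideanSpace ℝ (Fin n) → EuclideanSpace ℝ (Fin (n * n))}
    (hA : Measurable A) {M : ℝ} (hM : ∀ z, ‖A z‖ ≤ M) (hM0 : 0 ≤ M)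
    {B : EuclideanSpace ℝ (Fin n) → EuclideanSpace ℝ (Fin (n * n))}
    (hB : ∀ Y, B Y = ∫ z, (((infDist Y (frontier Ω)) ^ n)⁻¹ *
        θ ((infDist Y (frontier Ω))⁻¹ • (z - Y))) • A z)
    {y y' : EuclideanSpace ℝ (Fin n)} (hy : 0 < infDist y (frontier Ω))
    (hy' : ‖y' - y‖ ≤ infDist y (frontier Ω) / 16) :
    ‖B y' - B y‖ ≤ 2 ^ (n + 3) * (n * Cθ + Lθ + 1) / (infDist y (frontier Ω)) ^ (n + 1)
        * (∫ z in ball y (infDist y (frontier Ω) / 2), ‖A z - B y‖) * ‖y' - y‖ := by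
  set δ := infDist y (frontier Ω) with hδdef
  set t' := infDist y' (frontier Ω) with ht'def
  have hlipd : |t' - δ| ≤ ‖y' - y‖ := by
    have := (lipschitz_infDist_pt (frontier Ω)).dist_le_mul y' y
    rw [Real.dist_eq, dist_eq_norm] at this
    simpa using this
  have habs := abs_le.1 hlipd
  have ht'1 : δ / 2 ≤ t' := by linarith
  have ht'2 : t' ≤ 5 / 4 * δ := by linarith
  have ht'0 : 0 < t' := by linarith
  set v := B y with hv
  set k : EuclideanSpace ℝ (Fin n) → ℝ := fun z => (δ ^ n)⁻¹ * θ (δ⁻¹ • (z - y)) with hk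
  set k' : EuclideanSpace ℝ (Fin n) → ℝ := fun z => (t' ^ n)⁻¹ * θ (t'⁻¹ • (z - y')) with hk'
  have hki : Integrable (fun z => k z • A z) :=
    integrable_kernel_smul hθm hθsupp hCθ hA.aestronglyMeasurable hM hM0 hy y
  have hki' : Integrable (fun z => k' z • A z) :=
    integrable_kernel_smul hθm hθsupp hCθ hA.aestronglyMeasurable hM hM0 ht'0 y'
  have hkint : Integrable k := by
    have := integrable_kernel_smul (V := ℝ) hθm hθsupp hCθ aestronglyMeasurable_const
      (A := fun _ => (1 : ℝ)) (fun _ => by simp) zero_le_one hy y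
    simpa [smul_eq_mul, mul_one] using this
  have hkint' : Integrable k' := by
    have := integrable_kernel_smul (V := ℝ) hθm hθsupp hCθ aestronglyMeasurable_const
      (A := fun _ => (1 : ℝ)) (fun _ => by simp) zero_le_one ht'0 y'
    simpa [smul_eq_mul, mul_one] using this
  have hsum : ∫ z, k z = ∫ z, k' z := by
    rw [hk, hk']
    rw [integral_kernel θ hy y, integral_kernel θ ht'0 y']
  -- the key identity
  have hid : B y' - B y = ∫ z, (k' z - k z) • (A z - v) := by
    have e1 : (fun z => (k' z - k z) • (A z - v))
        = fun z => (k' z • A z - k z • A z) - (k' z • v - k z • v) := by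
      funext z
      rw [sub_smul, smul_sub, smul_sub]
      abel
    have h4 : ∫ z, (k' z • A z - k z • A z) - (k' z • v - k z • v)
        = (∫ z, (k' z • A z - k z • A z)) - ∫ z, (k' z • v - k z • v) :=
      integral_sub (hki'.sub hki) ((hkint'.smul_const v).sub (hkint.smul_const v))
    have h5 : ∫ z, (k' z • A z - k z • A z) = (∫ z, k' z • A z) - ∫ z, k z • A z :=
      integral_sub hki' hki
    have h6 : ∫ z, (k' z • v - k z • v) = (∫ z, k' z • v) - ∫ z, k z • v :=
      integral_sub (hkint'.smul_const v) (hkint.smul_const v)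
    have h7 : ∫ z, k' z • v = (∫ z, k' z) • v := integral_smul_const k' v
    have h8 : ∫ z, k z • v = (∫ z, k z) • v := integral_smul_const k v
    rw [e1, h4, h5, h6, h7, h8, ← hsum, sub_self, sub_zero, hB y', hB y,
      ← hδdef, ← ht'def]
  set c : ℝ := 2 ^ (n + 3) * (n * Cθ + Lθ + 1) / δ ^ (n + 1) * ‖y' - y‖ with hc
  have hc0 : 0 ≤ c := by
    have : (0:ℝ) ≤ Lθ := Lθ.coe_nonneg
    have hCθ0 : 0 ≤ Cθ := le_trans (abs_nonneg _) (hCθ 0)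
    positivity
  have hM2 : ∀ z, ‖A z - v‖ ≤ M + ‖v‖ := fun z =>
    (norm_sub_le _ _).trans (by gcongr; exact hM z)
  have hMv0 : 0 ≤ M + ‖v‖ := by positivity
  have hAv : AEStronglyMeasurable (fun z => A z - v) volume :=
    (hA.sub measurable_const).aestronglyMeasurable
  have hIball : IntegrableOn (fun z => c * ‖A z - v‖) (ball y (δ / 2)) := by
    refine integrableOn_of_bdd measure_ball_lt_top
      ((hAv.norm).const_mul c) (c := c * (M + ‖v‖)) fun z => ?_
    rw [Real.norm_eq_abs, abs_mul, abs_of_nonneg hc0, abs_of_nonneg (norm_nonneg _)]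
    exact mul_le_mul_of_nonneg_left (hM2 z) hc0
  have hindint : Integrable ((ball y (δ / 2)).indicator fun z => c * ‖A z - v‖) :=
    (integrable_indicator_iff measurableSet_ball).2 hIball
  have hptw : ∀ z, ‖(k' z - k z) • (A z - v)‖
      ≤ ((ball y (δ / 2)).indicator fun z => c * ‖A z - v‖) z := by
    intro z
    by_cases hz : z ∈ ball y (δ / 2)
    · rw [Set.indicator_of_mem hz, norm_smul, Real.norm_eq_abs]
      have hzy : ‖z - y‖ ≤ δ := by
        rw [mem_ball, dist_eq_norm] at hz
        linarith
      have hker := kernel_diff_le (δ := δ) (t := δ) (t' := t') (y := y) (y' := y') (z := z) hCθ hLθ hy (by linarith) ht'1 hzy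
      have hker2 : |k' z - k z| ≤ c := by
        refine hker.trans ?_
        rw [hc]
        have e : (2:ℝ) ^ (n + 3) * (n * Cθ + Lθ + 1) / δ ^ (n + 1)
            = 2 ^ (n + 2) * (n * Cθ + Lθ + 1) / δ ^ (n + 1) * 2 := by ring
        rw [e, mul_assoc]
        have hCθ0 : 0 ≤ Cθ := le_trans (abs_nonneg _) (hCθ 0)
        have hL0 : (0:ℝ) ≤ Lθ := Lθ.coe_nonneg
        refine mul_le_mul_of_nonneg_left ?_ (by positivity)
        have : |t' - δ| ≤ ‖y' - y‖ := hlipd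
        linarith [abs_nonneg (t' - δ)]
      exact mul_le_mul_of_nonneg_right hker2 (norm_nonneg _)
    · rw [Set.indicator_of_notMem hz]
      have hzy : δ / 2 ≤ ‖z - y‖ := by
        rw [mem_ball, dist_eq_norm, not_lt] at hz
        exact hz
      have h1 : θ (δ⁻¹ • (z - y)) = 0 := ker_eq_zero hθsupp hy (by linarith)
      have h2 : θ (t'⁻¹ • (z - y')) = 0 := by
        refine ker_eq_zero hθsupp ht'0 ?_
        have e : z - y' = (z - y) - (y' - y) := by abel
        have : ‖z - y‖ - ‖y' - y‖ ≤ ‖z - y'‖ := by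
          rw [e]; exact norm_sub_norm_le _ _ |>.trans (le_refl _)
        linarith
      simp [hk, hk', h1, h2]
  have hnorm : ‖B y' - B y‖ ≤ ∫ z, ((ball y (δ / 2)).indicator fun z => c * ‖A z - v‖) z := by
    rw [hid]
    exact norm_integral_le_of_norm_le hindint (ae_of_all _ hptw)
  rw [integral_indicator measurableSet_ball, MeasureTheory.integral_const_mul] at hnorm
  refine hnorm.trans (le_of_eq ?_)
  rw [hc]
  ring

end MollAux

open MollAux

set_option maxHeartbeats 1000000 in
/-- The Whitney-scale mollification `B(Y) = ∬ A(Z) δ(Y)^{−n} θ((Z−Y)/δ(Y)) dZ` of a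
bounded measurable matrix-valued map `A` (matrices encoded as vectors in `ℝ^{n·n}`)
is locally Lipschitz in `Ω`, and `δ(Y)|∇B(Y)|` is bounded by a constant times the
`L²` oscillation `(⨍_{B(Y,δ(Y)/2)} |A − B(Y)|²)^{1/2}`; in particular
`δ|∇B| ∈ L^∞(Ω)` with bound depending only on `n`, `θ` and `‖A‖_∞`. -/
theorem mollified_matrix_gradient_bound (n : ℕ) (hn : 0 < n)
    (θ : EuclideanSpace ℝ (Fin n) → ℝ) (hθ : ContDiff ℝ (⊤ : ℕ∞) θ)
    (hθc : HasCompactSupport θ) (hθsupp : Function.support θ ⊆ ball 0 (1 / 8))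
    (hθint : (∫ x, θ x) = 1) (M : ℝ) :
    ∃ C : ℝ, 0 < C ∧
      ∀ (Ω : Set (EuclideanSpace ℝ (Fin n))), IsOpen Ω → (frontier Ω).Nonempty →
      ∀ (A : EuclideanSpace ℝ (Fin n) → EuclideanSpace ℝ (Fin (n * n))),
        Measurable A → (∀ Z, ‖A Z‖ ≤ M) →
      ∀ (B : EuclideanSpace ℝ (Fin n) → EuclideanSpace ℝ (Fin (n * n))),
        (∀ Y, B Y = ∫ Z, (((infDist Y (frontier Ω)) ^ n)⁻¹ *
            θ ((infDist Y (frontier Ω))⁻¹ • (Z - Y))) • A Z) →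
        (∀ Y ∈ Ω, ∃ K : NNReal, ∃ ε : ℝ, 0 < ε ∧ LipschitzOnWith K B (ball Y ε)) ∧
        ∀ Y ∈ Ω,
          infDist Y (frontier Ω) * ‖fderiv ℝ B Y‖ ≤
              C * Real.sqrt (⨍ Z in ball Y (infDist Y (frontier Ω) / 2), ‖A Z - B Y‖ ^ 2) ∧
            infDist Y (frontier Ω) * ‖fderiv ℝ B Y‖ ≤ C := by
  classical
  obtain ⟨Cθ₀, hCθ₀⟩ := hθc.exists_bound_of_continuous hθ.continuous
  set Cθ := max Cθ₀ 0 with hCθdef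
  have hCθ : ∀ x, |θ x| ≤ Cθ := fun x => by
    have := hCθ₀ x
    rw [Real.norm_eq_abs] at this
    exact this.trans (le_max_left _ _)
  have hCθ0 : 0 ≤ Cθ := le_max_right _ _
  obtain ⟨Lθ, hLθ⟩ := ContDiff.lipschitzWith_of_hasCompactSupport hθc hθ (by simp)
  set Iθ := ∫ x, |θ x| with hIθdef
  have hIθ1 : 1 ≤ Iθ := by
    calc (1:ℝ) = |∫ x, θ x| := by rw [hθint]; norm_num
      _ ≤ ∫ x, |θ x| := by
          simpa [Real.norm_eq_abs] using norm_integral_le_integral_norm (f := θ) (μ := volume)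
  have hIθ0 : 0 ≤ Iθ := by linarith
  set ω := (volume (ball (0 : EuclideanSpace ℝ (Fin n)) 1)).toReal with hωdef
  have hω0 : 0 < ω :=
    ENNReal.toReal_pos (measure_ball_pos _ _ one_pos).ne' measure_ball_lt_top.ne
  have hLθ0 : (0:ℝ) ≤ Lθ := Lθ.coe_nonneg
  set C₁ : ℝ := 2 ^ (n + 3) * (n * Cθ + Lθ + 1) with hC₁
  have hC₁0 : 0 < C₁ := by positivity
  set M' := max M 0 with hM'def
  have hM'0 : 0 ≤ M' := le_max_right _ _
  set M₂ := M' * (1 + Iθ) with hM₂def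
  have hM₂0 : 0 ≤ M₂ := mul_nonneg hM'0 (by linarith)
  set C₂ := C₁ * ω / 2 ^ n with hC₂
  have hC₂0 : 0 < C₂ := by positivity
  have hCmax : C₂ ≤ max C₂ (C₂ * M₂) + 1 := by linarith [le_max_left C₂ (C₂ * M₂)]
  refine ⟨max C₂ (C₂ * M₂) + 1, by linarith, ?_⟩
  intro Ω hΩ hfr A hA hAM B hB
  have hMM' : ∀ z, ‖A z‖ ≤ M' := fun z => (hAM z).trans (le_max_left _ _)
  have hdpos : ∀ Y ∈ Ω, 0 < infDist Y (frontier Ω) := by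
    intro Y hY
    refine (isClosed_frontier.notMem_iff_infDist_pos hfr).1 ?_
    intro hmem
    rw [hΩ.frontier_eq] at hmem
    exact hmem.2 hY
  have hBle : ∀ x, 0 < infDist x (frontier Ω) → ‖B x‖ ≤ M' * Iθ := by
    intro x hx
    rw [hB x]
    exact norm_B_le hθ.continuous hθsupp hCθ hA.aestronglyMeasurable hMM' hM'0 hx x
  have hABle : ∀ x, 0 < infDist x (frontier Ω) → ∀ z, ‖A z - B x‖ ≤ M₂ := by
    intro x hx z
    calc ‖A z - B x‖ ≤ ‖A z‖ + ‖B x‖ := norm_sub_le _ _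
      _ ≤ M' + M' * Iθ := add_le_add (hMM' z) (hBle x hx)
      _ = M₂ := by rw [hM₂def]; ring
  constructor
  · -- local Lipschitz
    intro Y hY
    have hδ : 0 < infDist Y (frontier Ω) := hdpos Y hY
    set δ := infDist Y (frontier Ω) with hδdef
    set K' : ℝ := C₁ / (31 / 32 * δ) ^ (n + 1) * (M₂ * (volume (ball Y (2 * δ))).toReal)
      with hK'def
    have hK'0 : 0 ≤ K' :=
      mul_nonneg (by positivity) (mul_nonneg hM₂0 ENNReal.toReal_nonneg)
    refine ⟨Real.toNNReal K', δ / 64, by positivity, ?_⟩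
    apply LipschitzOnWith.of_dist_le'
    intro Y₁ hY₁ Y₂ hY₂
    rw [mem_ball, dist_eq_norm] at hY₁ hY₂
    have hlip1 : |infDist Y₁ (frontier Ω) - δ| ≤ ‖Y₁ - Y‖ := by
      have := (lipschitz_infDist_pt (frontier Ω)).dist_le_mul Y₁ Y
      rw [Real.dist_eq, dist_eq_norm] at this
      simpa using this
    set d1 := infDist Y₁ (frontier Ω) with hd1def
    have habs1 := abs_le.1 hlip1
    have hd1l : 31 / 32 * δ ≤ d1 := by linarith
    have hd1pos : 0 < d1 := by linarith
    have hd1u : d1 ≤ 65 / 64 * δ := by linarith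
    have hYY : ‖Y₂ - Y₁‖ ≤ d1 / 16 := by
      have h2 : ‖Y₂ - Y₁‖ ≤ ‖Y₂ - Y‖ + ‖Y - Y₁‖ := by
        have e : Y₂ - Y₁ = (Y₂ - Y) + (Y - Y₁) := by abel
        rw [e]; exact norm_add_le _ _
      rw [norm_sub_rev Y Y₁] at h2
      linarith
    have hdb := diff_bound hθ.continuous hθsupp hCθ hLθ hA hMM' hM'0 hB hd1pos hYY
    rw [← hC₁, ← hd1def] at hdb
    have hsub : ball Y₁ (d1 / 2) ⊆ ball Y (2 * δ) := by
      intro z hz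
      rw [mem_ball, dist_eq_norm] at hz ⊢
      have h3 : ‖z - Y‖ ≤ ‖z - Y₁‖ + ‖Y₁ - Y‖ := by
        have e : z - Y = (z - Y₁) + (Y₁ - Y) := by abel
        rw [e]; exact norm_add_le _ _
      linarith
    have hIbd : (∫ z in ball Y₁ (d1 / 2), ‖A z - B Y₁‖)
        ≤ M₂ * (volume (ball Y (2 * δ))).toReal := by
      have h1 : (∫ z in ball Y₁ (d1 / 2), ‖A z - B Y₁‖) ≤ ∫ _z in ball Y₁ (d1 / 2), M₂ := by
        refine setIntegral_mono_on ?_ ?_ measurableSet_ball ?_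
        · refine integrableOn_of_bdd measure_ball_lt_top
            ((hA.sub measurable_const).norm.aestronglyMeasurable) (c := M₂) fun z => ?_
          rw [Real.norm_eq_abs, abs_of_nonneg (norm_nonneg _)]
          exact hABle Y₁ hd1pos z
        · exact integrableOn_const measure_ball_lt_top.ne
        · exact fun z _ => hABle Y₁ hd1pos z
      rw [setIntegral_const, smul_eq_mul] at h1
      refine h1.trans ?_
      rw [mul_comm]
      exact mul_le_mul_of_nonneg_left
        (ENNReal.toReal_mono measure_ball_lt_top.ne (measure_mono hsub)) hM₂0
    have hI10 : 0 ≤ ∫ z in ball Y₁ (d1 / 2), ‖A z - B Y₁‖ :=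
      setIntegral_nonneg measurableSet_ball fun z _ => norm_nonneg _
    have hcoeff : C₁ / d1 ^ (n + 1) * (∫ z in ball Y₁ (d1 / 2), ‖A z - B Y₁‖) ≤ K' := by
      rw [hK'def]
      refine mul_le_mul ?_ hIbd hI10 (by positivity)
      refine div_le_div_of_nonneg_left hC₁0.le (by positivity) ?_
      exact pow_le_pow_left₀ (by positivity) hd1l (n + 1)
    calc dist (B Y₁) (B Y₂) = ‖B Y₂ - B Y₁‖ := by rw [dist_eq_norm, norm_sub_rev]
      _ ≤ C₁ / d1 ^ (n + 1) * (∫ z in ball Y₁ (d1 / 2), ‖A z - B Y₁‖) * ‖Y₂ - Y₁‖ := hdb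
      _ ≤ K' * ‖Y₂ - Y₁‖ := mul_le_mul_of_nonneg_right hcoeff (norm_nonneg _)
      _ = K' * dist Y₁ Y₂ := by rw [dist_eq_norm, norm_sub_rev]
  · -- gradient bound
    intro Y hY
    have hδ : 0 < infDist Y (frontier Ω) := hdpos Y hY
    set δ := infDist Y (frontier Ω) with hδdef
    have hv : 0 < (volume (ball Y (δ / 2))).toReal :=
      ENNReal.toReal_pos (measure_ball_pos _ _ (by linarith)).ne' measure_ball_lt_top.ne
    set v := (volume (ball Y (δ / 2))).toReal with hvdef
    have hfmeas : AEStronglyMeasurable (fun z => ‖A z - B Y‖) volume :=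
      (hA.sub measurable_const).norm.aestronglyMeasurable
    have hfint : IntegrableOn (fun z => ‖A z - B Y‖) (ball Y (δ / 2)) := by
      refine integrableOn_of_bdd measure_ball_lt_top hfmeas (c := M₂) fun z => ?_
      rw [Real.norm_eq_abs, abs_of_nonneg (norm_nonneg _)]
      exact hABle Y hδ z
    have hf2meas : AEStronglyMeasurable (fun z => ‖A z - B Y‖ ^ 2) volume :=
      (((hA.sub measurable_const).norm).pow_const 2).aestronglyMeasurable
    have hf2int : IntegrableOn (fun z => ‖A z - B Y‖ ^ 2) (ball Y (δ / 2)) := by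
      refine integrableOn_of_bdd measure_ball_lt_top hf2meas (c := M₂ ^ 2) fun z => ?_
      rw [Real.norm_eq_abs, abs_of_nonneg (by positivity)]
      exact pow_le_pow_left₀ (norm_nonneg _) (hABle Y hδ z) 2
    set I₁ := ∫ z in ball Y (δ / 2), ‖A z - B Y‖ with hI₁def
    set I₂ := ∫ z in ball Y (δ / 2), ‖A z - B Y‖ ^ 2 with hI₂def
    have hI₁0 : 0 ≤ I₁ := setIntegral_nonneg measurableSet_ball fun z _ => norm_nonneg _
    have hI₂0 : 0 ≤ I₂ := setIntegral_nonneg measurableSet_ball fun z _ => by positivity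
    have hD : ‖fderiv ℝ B Y‖ ≤ C₁ / δ ^ (n + 1) * I₁ := by
      refine norm_fderiv_le_of_lip' ℝ (mul_nonneg (by positivity) hI₁0) ?_
      filter_upwards [ball_mem_nhds Y (show (0:ℝ) < δ / 16 by linarith)] with y' hy'
      rw [mem_ball, dist_eq_norm] at hy'
      have h := diff_bound hθ.continuous hθsupp hCθ hLθ hA hMM' hM'0 hB hδ hy'.le
      rw [← hC₁, ← hδdef, ← hI₁def] at h
      exact h
    have hCS : I₁ ^ 2 ≤ v * I₂ := by
      have key : ∀ s' : ℝ, 0 < s' → 2 * s' * I₁ - s' ^ 2 * v ≤ I₂ := by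
        intro s' hs'
        have hconst : IntegrableOn (fun _z : EuclideanSpace ℝ (Fin n) => s' ^ 2)
            (ball Y (δ / 2)) := integrableOn_const measure_ball_lt_top.ne
        have hleft : IntegrableOn (fun z => 2 * s' * ‖A z - B Y‖ - s' ^ 2) (ball Y (δ / 2)) :=
          (hfint.const_mul _).sub hconst
        have hmono := setIntegral_mono_on hleft hf2int measurableSet_ball
          (fun z _ => by nlinarith [sq_nonneg (‖A z - B Y‖ - s'), norm_nonneg (A z - B Y)])
        have hsplit : ∫ z in ball Y (δ / 2), (2 * s' * ‖A z - B Y‖ - s' ^ 2)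
            = 2 * s' * I₁ - s' ^ 2 * v := by
          rw [integral_sub (hfint.const_mul _) hconst, MeasureTheory.integral_const_mul,
            setIntegral_const, smul_eq_mul, measureReal_def, ← hI₁def, ← hvdef, mul_comm (s' ^ 2) v]
        rw [hsplit] at hmono
        exact hmono
      rcases eq_or_lt_of_le hI₁0 with h0 | hpos
      · rw [← h0]
        have : 0 ≤ v * I₂ := mul_nonneg hv.le hI₂0
        simpa using this
      · have hk := key (I₁ / v) (div_pos hpos hv)
        have e : 2 * (I₁ / v) * I₁ - (I₁ / v) ^ 2 * v = I₁ ^ 2 / v := by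
          field_simp
          ring
        rw [e, div_le_iff₀ hv] at hk
        linarith [hk]
    have hsv : I₁ ≤ Real.sqrt v * Real.sqrt I₂ := by
      rw [← Real.sqrt_mul hv.le]
      exact (Real.le_sqrt hI₁0 (mul_nonneg hv.le hI₂0)).2 hCS
    have havg : (⨍ z in ball Y (δ / 2), ‖A z - B Y‖ ^ 2) = v⁻¹ * I₂ := by
      rw [setAverage_eq, smul_eq_mul, measureReal_def, ← hvdef, ← hI₂def]
    have hsv0 : 0 < Real.sqrt v := Real.sqrt_pos.2 hv
    have hsq : Real.sqrt v ^ 2 = v := Real.sq_sqrt hv.le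
    have hsqrtavg : Real.sqrt (⨍ z in ball Y (δ / 2), ‖A z - B Y‖ ^ 2)
        = (Real.sqrt v)⁻¹ * Real.sqrt I₂ := by
      rw [havg, Real.sqrt_mul (inv_nonneg.2 hv.le), Real.sqrt_inv]
    have hvol : v = (δ / 2) ^ n * ω := by
      rw [hvdef, Measure.addHaar_ball_of_pos volume Y (by linarith : (0:ℝ) < δ / 2),
        finrank_euclideanSpace_fin, ENNReal.toReal_mul, ENNReal.toReal_ofReal (by positivity),
        ← hωdef]
    have hkey : δ * ‖fderiv ℝ B Y‖ ≤ C₂ * Real.sqrt (⨍ z in ball Y (δ / 2), ‖A z - B Y‖ ^ 2) := by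
      rw [hsqrtavg]
      calc δ * ‖fderiv ℝ B Y‖ ≤ δ * (C₁ / δ ^ (n + 1) * I₁) := mul_le_mul_of_nonneg_left hD hδ.le
        _ ≤ δ * (C₁ / δ ^ (n + 1) * (Real.sqrt v * Real.sqrt I₂)) := by
            refine mul_le_mul_of_nonneg_left (mul_le_mul_of_nonneg_left hsv ?_) hδ.le
            positivity
        _ = (C₁ * v / δ ^ n) * ((Real.sqrt v)⁻¹ * Real.sqrt I₂) := by
            set a := Real.sqrt v with hadef
            have ha0 : a ≠ 0 := hsv0.ne'
            have haa : a * a = v := Real.mul_self_sqrt hv.le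
            rw [← haa]
            field_simp [hδ.ne', ha0]
            ring
        _ = C₂ * ((Real.sqrt v)⁻¹ * Real.sqrt I₂) := by
            rw [hvol, hC₂, div_pow]
            field_simp [hδ.ne']
    have havg2 : Real.sqrt (⨍ z in ball Y (δ / 2), ‖A z - B Y‖ ^ 2) ≤ M₂ := by
      have h1 : I₂ ≤ ∫ _z in ball Y (δ / 2), M₂ ^ 2 := by
        refine setIntegral_mono_on hf2int (integrableOn_const measure_ball_lt_top.ne)
          measurableSet_ball fun z _ => ?_
        exact pow_le_pow_left₀ (norm_nonneg _) (hABle Y hδ z) 2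
      rw [setIntegral_const, smul_eq_mul, measureReal_def, ← hvdef] at h1
      have h2 : v⁻¹ * I₂ ≤ M₂ ^ 2 := by
        rw [inv_mul_le_iff₀ hv]
        first
        | exact h1
        | exact h1.trans_eq (mul_comm _ _)
      rw [havg]
      exact (Real.sqrt_le_sqrt h2).trans (by rw [Real.sqrt_sq hM₂0])
    constructor
    · exact hkey.trans (mul_le_mul_of_nonneg_right hCmax (Real.sqrt_nonneg _))
    · refine hkey.trans ?_
      calc C₂ * Real.sqrt (⨍ z in ball Y (δ / 2), ‖A z - B Y‖ ^ 2)
          ≤ C₂ * M₂ := mul_le_mul_of_nonneg_left havg2 hC₂0.le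
        _ ≤ max C₂ (C₂ * M₂) + 1 := by linarith [le_max_right C₂ (C₂ * M₂)]
end
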